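/- Let t be a λ-term, x⃗ = x₁,...,xₙ a list of variables (not necessarily distinct), and y⃗ = y₁,...,yₙ a list of pairwise distinct variables such that no yᵢ occurs free in λx⃗.t. Then the β-normal form of the application (λx₁...λxₙ.t)(y₁,...,yₙ) equals Πₙ(x⃗, y⃗)·t, where Πₙ(x⃗, y⃗) is the permutation of variable names defined by Π₁(⟨x⟩,⟨y⟩) = (x y) and Πₙ(⟨x₁,...,xₙ⟩,⟨y₁,...,yₙ⟩) = Πₙ₋₁(⟨(x₁ y₁)·x₂,...,(x₁ y₁)·xₙ⟩, ⟨y₂,...,yₙ⟩) ∘ (x₁ y₁). -/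
import Mathlib


set_option linter.unreachableTactic false
set_option linter.unusedTactic false

/-! Nominal terms -/

abbrev Atom := ℕ
abbrev Var := ℕ

/-- The swapping `(a b)` acting on atoms. -/
def swapAtom (a b c : Atom) : Atom := if c = a then b else if c = b then a else c

/-- A permutation presented as a finite list of swappings. -/
abbrev Perm0 := List (Atom × Atom)

/-- Action of a list of swappings: `(a₁ b₁)…(aₙ bₙ)·c = (a₁ b₁)·(…·((aₙ bₙ)·c))`. -/
def permAtom (π : Perm0) (c : Atom) : Atom := π.foldr (fun p d => swapAtom p.1 p.2 d) c

/-- Nominal terms. -/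
inductive NTerm where
  | atom : Atom → NTerm
  | app  : ℕ → List NTerm → NTerm
  | abs  : Atom → NTerm → NTerm
  | susp : Perm0 → Var → NTerm

/-- Action of a permutation (list of swappings) on a nominal term. -/
def permTerm (π : Perm0) : NTerm → NTerm
  | .atom a => .atom (permAtom π a)
  | .app f ts => .app f (ts.attach.map (fun t => permTerm π t.1))
  | .abs a t => .abs (permAtom π a) (permTerm π t)
  | .susp π' X => .susp (π ++ π') X
decreasing_by
  all_goals simp_wf
  all_goals first
    | (have := List.sizeOf_lt_of_mem t.2; omega)
    | omega

/-- Action of a single swapping on a nominal term. -/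
def swapTerm (a b : Atom) (t : NTerm) : NTerm := permTerm [(a, b)] t

/-- Variables of a nominal term. -/
def nvars : NTerm → Finset Var
  | .atom _ => ∅
  | .app _ ts => ts.attach.foldr (fun t s => nvars t.1 ∪ s) ∅
  | .abs _ t => nvars t
  | .susp _ X => {X}
decreasing_by
  all_goals simp_wf
  all_goals first
    | (have := List.sizeOf_lt_of_mem t.2; omega)
    | omega

/-- Atoms of a nominal term (including those in suspended permutations). -/
def natoms : NTerm → Finset Atom
  | .atom a => {a}
  | .app _ ts => ts.attach.foldr (fun t s => natoms t.1 ∪ s) ∅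
  | .abs a t => insert a (natoms t)
  | .susp π _ => π.foldr (fun p s => insert p.1 (insert p.2 s)) ∅
decreasing_by
  all_goals simp_wf
  all_goals first
    | (have := List.sizeOf_lt_of_mem t.2; omega)
    | omega

/-- Size of a nominal term. -/
def sizeN : NTerm → ℕ
  | .atom _ => 1
  | .app _ ts => 1 + (ts.attach.map (fun t => sizeN t.1)).sum
  | .abs _ t => 1 + sizeN t
  | .susp π _ => 1 + π.length
decreasing_by
  all_goals simp_wf
  all_goals first
    | (have := List.sizeOf_lt_of_mem t.2; omega)
    | omega

/-! Freshness and α-equivalence for nominal terms -/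

/-- The freshness judgement `Δ ⊢ a # t`. -/
inductive Fresh (Δ : Finset (Atom × Var)) : Atom → NTerm → Prop
  | atom {a a'} : a ≠ a' → Fresh Δ a (.atom a')
  | susp {a π X} : (permAtom π.reverse a, X) ∈ Δ → Fresh Δ a (.susp π X)
  | app {a f ts} : (∀ t ∈ ts, Fresh Δ a t) → Fresh Δ a (.app f ts)
  | abs1 {a t} : Fresh Δ a (.abs a t)
  | abs2 {a a' t} : a ≠ a' → Fresh Δ a t → Fresh Δ a (.abs a' t)

/-- The α-equivalence judgement `Δ ⊢ t ≈ u`. -/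
inductive Alpha (Δ : Finset (Atom × Var)) : NTerm → NTerm → Prop
  | atom (a) : Alpha Δ (.atom a) (.atom a)
  | susp {π π' X} : (∀ a, permAtom π a ≠ permAtom π' a → (a, X) ∈ Δ) →
      Alpha Δ (.susp π X) (.susp π' X)
  | app {f ts us} : ts.length = us.length →
      (∀ p ∈ ts.zip us, Alpha Δ p.1 p.2) → Alpha Δ (.app f ts) (.app f us)
  | abs1 {a t u} : Alpha Δ t u → Alpha Δ (.abs a t) (.abs a u)
  | abs2 {a b t u} : a ≠ b → Alpha Δ t (swapTerm a b u) → Fresh Δ a u →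
      Alpha Δ (.abs a t) (.abs b u)

/-- Nominal substitutions (partial, with explicit domain). -/
abbrev NSub := Var → Option NTerm

/-- Domain of a nominal substitution. -/
def domN (σ : NSub) : Set Var := {X | (σ X).isSome}

/-- Application of a nominal substitution (capturing; suspended permutations are applied). -/
def applyN (σ : NSub) : NTerm → NTerm
  | .atom a => .atom a
  | .app f ts => .app f (ts.attach.map (fun t => applyN σ t.1))
  | .abs a t => .abs a (applyN σ t)
  | .susp π X =>
      match σ X with
      | some u => permTerm π u
      | none => .susp π X
decreasing_by
  all_goals simp_wf
  all_goals first
    | (have := List.sizeOf_lt_of_mem t.2; omega)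
    | omega

/-- The trivial suspension of a variable. -/
def nsuspV (X : Var) : NTerm := .susp [] X

/-! λ-terms -/

/-- λ-calculus variables: either (the image of) an atom or (the image of) a nominal variable. -/
abbrev LVar := Atom ⊕ Var

/-- Untyped λ-terms with constants. -/
inductive LTerm where
  | var : LVar → LTerm
  | const : ℕ → LTerm
  | lam : LVar → LTerm → LTerm
  | app : LTerm → LTerm → LTerm
deriving DecidableEq

/-- Iterated application `h(t₁,…,tₙ)`. -/
def appList (h : LTerm) (ts : List LTerm) : LTerm := ts.foldl .app h

/-- Iterated abstraction `λx₁…λxₙ.t`. -/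
def lamList (xs : List LVar) (t : LTerm) : LTerm := xs.foldr .lam t

/-- Free variables of a λ-term. -/
def FVL : LTerm → Finset LVar
  | .var v => {v}
  | .const _ => ∅
  | .lam x t => (FVL t).erase x
  | .app t u => FVL t ∪ FVL u

/-- All variables (free, bound and binding) of a λ-term. -/
def allVarsL : LTerm → Finset LVar
  | .var v => {v}
  | .const _ => ∅
  | .lam x t => insert x (allVarsL t)
  | .app t u => allVarsL t ∪ allVarsL u

/-- Binder variables of a λ-term. -/
def bvarsL : LTerm → Finset LVar
  | .var _ => ∅
  | .const _ => ∅
  | .lam x t => insert x (bvarsL t)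
  | .app t u => bvarsL t ∪ bvarsL u

/-- Size of a λ-term. -/
def sizeL : LTerm → ℕ
  | .var _ => 1
  | .const _ => 1
  | .lam _ t => 1 + sizeL t
  | .app t u => 1 + sizeL t + sizeL u

/-- The function on variable names exchanging `x` and `y`. -/
def varMap (x y : LVar) : LVar → LVar := fun z => if z = x then y else if z = y then x else z

/-- Renaming all occurrences of variables (free, bound and binding) of a λ-term. -/
def renameAll (f : LVar → LVar) : LTerm → LTerm
  | .var v => .var (f v)
  | .const c => .const c
  | .lam x t => .lam (f x) (renameAll f t)
  | .app t u => .app (renameAll f t) (renameAll f u)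

/-- The swapping `(x y)·t` on λ-terms, exchanging `x` and `y` at every occurrence. -/
def swapL (x y : LVar) (t : LTerm) : LTerm := renameAll (varMap x y) t

theorem sizeL_renameAll (f : LVar → LVar) (t : LTerm) : sizeL (renameAll f t) = sizeL t := by
  induction t <;> simp [renameAll, sizeL, *]

/-- α-equivalence of λ-terms. -/
inductive AEq : LTerm → LTerm → Prop
  | var (v) : AEq (.var v) (.var v)
  | const (c) : AEq (.const c) (.const c)
  | app {t t' u u'} : AEq t t' → AEq u u' → AEq (.app t u) (.app t' u')
  | lam {x y t u} (z : LVar) : z ∉ allVarsL t → z ∉ allVarsL u → z ≠ x → z ≠ y →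
      AEq (swapL x z t) (swapL y z u) → AEq (.lam x t) (.lam y u)

/-- Naive (possibly capturing) substitution of `u` for the free variable `x`. -/
def nsubst (x : LVar) (u : LTerm) : LTerm → LTerm
  | .var y => if y = x then u else .var y
  | .const c => .const c
  | .app t1 t2 => .app (nsubst x u t1) (nsubst x u t2)
  | .lam y t => if y = x then .lam y t else .lam y (nsubst x u t)

/-- αβη-convertibility of λ-terms.  The β-rule carries a capture-freeness side
condition; arbitrary redexes are handled by first α-converting. -/
inductive Conv : LTerm → LTerm → Prop
  | refl (t) : Conv t t
  | symm {t u} : Conv t u → Conv u t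
  | trans {t u v} : Conv t u → Conv u v → Conv t v
  | appc {t t' u u'} : Conv t t' → Conv u u' → Conv (.app t u) (.app t' u')
  | lamc {x t t'} : Conv t t' → Conv (.lam x t) (.lam x t')
  | alpha {t u} : AEq t u → Conv t u
  | beta {x t u} : (∀ v ∈ FVL u, v ∉ bvarsL t) → Conv (.app (.lam x t) u) (nsubst x u t)
  | eta {x t} : x ∉ FVL t → Conv (.lam x (.app t (.var x))) t

/-- A fresh variable not occurring in a given finite set. -/
def freshVar (s : Finset LVar) : LVar :=
  .inl ((s.image (fun v => match v with | .inl a => a | .inr b => b)).sup id + 1)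

/-- Capture-avoiding simultaneous renaming of free variables along `ρ`. -/
def casub (ρ : LVar → LVar) : LTerm → LTerm
  | .var z => .var (ρ z)
  | .const c => .const c
  | .app t u => .app (casub ρ t) (casub ρ u)
  | .lam z t =>
      if h : ∃ w ∈ FVL t, w ≠ z ∧ ρ w = z then
        let z' := freshVar (allVarsL t ∪ (FVL t).image ρ ∪ {z})
        .lam z' (casub ρ (swapL z z' t))
      else .lam z (casub (fun w => if w = z then z else ρ w) t)
termination_by t => sizeL t
decreasing_by
  all_goals simp_wf
  all_goals simp [swapL, sizeL_renameAll, sizeL]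
  all_goals omega

/-! Sorts and simple types -/

/-- Nominal sorts and arities: atom sorts `ν`, data sorts `δ`, abstraction
sorts `⟨ν⟩τ` and arities `τ₁×…×τₙ→δ`. -/
inductive NSort where
  | atom : ℕ → NSort
  | data : ℕ → NSort
  | abs : ℕ → NSort → NSort
  | arr : List NSort → ℕ → NSort

/-- Simple types with one base type per atom sort and per data sort. -/
inductive STy where
  | atomT : ℕ → STy
  | dataT : ℕ → STy
  | arrT : STy → STy → STy
deriving DecidableEq

/-- The sort-to-type translation `⟦·⟧`. -/
def trSort : NSort → STy
  | .atom n => .atomT n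
  | .data n => .dataT n
  | .abs n τ => .arrT (.atomT n) (trSort τ)
  | .arr τs d => τs.attach.foldr (fun τ T => .arrT (trSort τ.1) T) (.dataT d)
decreasing_by
  all_goals simp_wf
  all_goals first
    | (have := List.sizeOf_lt_of_mem τ.2; omega)
    | omega

/-- A sort is basic if it is an atom sort or a data sort. -/
def NSort.isBasic : NSort → Prop
  | .atom _ => True
  | .data _ => True
  | _ => False

/-- A nominal signature: sorts of atoms, sorts of variables, arities of function symbols. -/
structure Sig where
  sortA : Atom → ℕ
  sortV : Var → NSort
  arF : ℕ → List NSort × ℕ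

/-- The sorting judgement for nominal terms. -/
inductive HasSortN (S : Sig) : NTerm → NSort → Prop
  | atom (a) : HasSortN S (.atom a) (.atom (S.sortA a))
  | app {f ts} : ts.length = (S.arF f).1.length →
      (∀ p ∈ ts.zip (S.arF f).1, HasSortN S p.1 p.2) →
      HasSortN S (.app f ts) (.data (S.arF f).2)
  | abs {a t τ} : HasSortN S t τ → HasSortN S (.abs a t) (.abs (S.sortA a) τ)
  | susp {π X} : (∀ a, S.sortA (permAtom π a) = S.sortA a) →
      HasSortN S (.susp π X) (S.sortV X)

/-! The translation from nominal terms to λ-terms -/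

/-- The atoms capturable by `X` under `Δ`: the sublist of `as` of atoms `a` with `a # X ∉ Δ`. -/
def capList (as : List Atom) (Δ : Finset (Atom × Var)) (X : Var) : List Atom :=
  as.filter (fun a => (a, X) ∉ Δ)

/-- The translation `⟦t⟧_Δ` of a nominal term into a λ-term, relative to the
fixed atom list `as` and the freshness environment `Δ`. -/
def trT (as : List Atom) (Δ : Finset (Atom × Var)) : NTerm → LTerm
  | .atom a => .var (.inl a)
  | .app f ts => appList (.const f) (ts.attach.map (fun t => trT as Δ t.1))
  | .abs a t => .lam (.inl a) (trT as Δ t)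
  | .susp π X => appList (.var (.inr X))
      ((capList as Δ X).map (fun b => .var (.inl (permAtom π b))))
decreasing_by
  all_goals simp_wf
  all_goals first
    | (have := List.sizeOf_lt_of_mem t.2; omega)
    | omega

/-- Typing contexts as total functions. -/
abbrev Ctx := LVar → STy

/-- The simply-typed λ-calculus typing judgement. -/
inductive HasTy (cty : ℕ → STy) : Ctx → LTerm → STy → Prop
  | var (Γ : Ctx) (v) : HasTy cty Γ (.var v) (Γ v)
  | const (Γ : Ctx) (c) : HasTy cty Γ (.const c) (cty c)
  | lam {Γ : Ctx} {x t T U} : HasTy cty (Function.update Γ x T) t U →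
      HasTy cty Γ (.lam x t) (.arrT T U)
  | app {Γ : Ctx} {t u T U} : HasTy cty Γ t (.arrT T U) → HasTy cty Γ u T →
      HasTy cty Γ (.app t u) U

/-- Type of the constant translating a function symbol `f : τ₁×…×τₙ→δ`. -/
def ctySig (S : Sig) (f : ℕ) : STy :=
  (S.arF f).1.foldr (fun τ T => .arrT (trSort τ) T) (.dataT (S.arF f).2)

/-- Type assigned to the free variable translating a nominal variable `X`. -/
def varTy (S : Sig) (as : List Atom) (Δ : Finset (Atom × Var)) (X : Var) : STy :=
  (capList as Δ X).foldr (fun a T => .arrT (.atomT (S.sortA a)) T) (trSort (S.sortV X))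

/-- The typing context of the translation: atoms get their atom-sort base type
and nominal variables get the arrow type over their capturable atoms. -/
def trCtx (S : Sig) (as : List Atom) (Δ : Finset (Atom × Var)) : Ctx
  | .inl a => .atomT (S.sortA a)
  | .inr X => varTy S as Δ X

/-! Higher-order patterns -/

/-- `IsPattern B t` : in the scope of bound variables `B`, every free variable of `t`
is applied to a list of pairwise distinct bound variables. -/
inductive IsPattern : List LVar → LTerm → Prop
  | bvar {B v} : v ∈ B → IsPattern B (.var v)
  | flex {B : List LVar} {X : Var} {args : List LVar} : (.inr X : LVar) ∉ B → (∀ a ∈ args, a ∈ B) → args.Nodup →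
      IsPattern B (appList (.var (.inr X)) (args.map .var))
  | rigid {B h ts} : ((∃ c, h = .const c) ∨ (∃ v, h = .var v ∧ v ∈ B)) →
      (∀ t ∈ ts, IsPattern B t) → IsPattern B (appList h ts)
  | lam {B x t} : IsPattern (x :: B) t → IsPattern B (.lam x t)

/-! Unification problems and their translations -/

/-- Constraints of a (general) nominal unification problem. -/
inductive NConstraint where
  | eq : NTerm → NTerm → NConstraint
  | fr : Atom → NTerm → NConstraint

/-- A nominal unification problem. -/
abbrev NProb := List NConstraint

/-- An equational nominal unification problem: a list of equality equations. -/
abbrev EProb := List (NTerm × NTerm)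

/-- `⟨Δ, σ⟩` solves a constraint. -/
def solvesC (Δ : Finset (Atom × Var)) (σ : NSub) : NConstraint → Prop
  | .eq t u => Alpha Δ (applyN σ t) (applyN σ u)
  | .fr a t => Fresh Δ a (applyN σ t)

/-- `⟨Δ, σ⟩` solves a nominal unification problem. -/
def solvesP (Δ : Finset (Atom × Var)) (σ : NSub) (P : NProb) : Prop :=
  ∀ c ∈ P, solvesC Δ σ c

/-- `⟨Δ, σ⟩` solves an equational nominal unification problem. -/
def solvesE (Δ : Finset (Atom × Var)) (σ : NSub) (P : EProb) : Prop :=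
  ∀ e ∈ P, Alpha Δ (applyN σ e.1) (applyN σ e.2)

/-- A problem is equational if it contains no freshness constraints. -/
def isEquational (P : NProb) : Prop := ∀ c ∈ P, ∀ a t, c ≠ .fr a t

def sizeConstraint : NConstraint → ℕ
  | .eq t u => 1 + sizeN t + sizeN u
  | .fr _ t => 2 + sizeN t

def sizeNP (P : NProb) : ℕ := (P.map sizeConstraint).sum

def sizeEP (P : EProb) : ℕ := (P.map (fun e => 1 + sizeN e.1 + sizeN e.2)).sum

/-- Variables of an equational problem. -/
def varsEP (P : EProb) : Finset Var := (P.map (fun e => nvars e.1 ∪ nvars e.2)).foldr (· ∪ ·) ∅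

/-- Atoms of an equational problem. -/
def atomsEP (P : EProb) : Finset Atom := (P.map (fun e => natoms e.1 ∪ natoms e.2)).foldr (· ∪ ·) ∅

/-- Translation of an equation: both sides are translated with the empty
environment and closed under `λa₁…λaₙ`. -/
def trEq (as : List Atom) (e : NTerm × NTerm) : LTerm × LTerm :=
  (lamList (as.map .inl) (trT as ∅ e.1), lamList (as.map .inl) (trT as ∅ e.2))

/-- Translation of an equational nominal problem into a higher-order problem. -/
def trProb (as : List Atom) (P : EProb) : List (LTerm × LTerm) := P.map (trEq as)

def sizeLP (Q : List (LTerm × LTerm)) : ℕ := (Q.map (fun e => 1 + sizeL e.1 + sizeL e.2)).sum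

/-! λ-substitutions -/

/-- λ-substitutions over the (images of) nominal variables, with explicit domain. -/
abbrev LSub := Var → Option LTerm

/-- Domain of a λ-substitution. -/
def domL (σ : LSub) : Set Var := {X | (σ X).isSome}

/-- Application of a λ-substitution.  (In translated problems the values are
closed with respect to atom variables, so no capture can occur.) -/
def applyL (σ : LSub) : LTerm → LTerm
  | .var (.inr X) => (σ X).getD (.var (.inr X))
  | .var v => .var v
  | .const c => .const c
  | .lam x t => .lam x (applyL σ t)
  | .app t u => .app (applyL σ t) (applyL σ u)

/-- `σ` solves a higher-order problem up to αβη. -/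
def solvesL (σ : LSub) (Q : List (LTerm × LTerm)) : Prop :=
  ∀ e ∈ Q, Conv (applyL σ e.1) (applyL σ e.2)

/-- The translation `⟦σ⟧_Δ` of a nominal substitution. -/
def trSub (as : List Atom) (Δ : Finset (Atom × Var)) (σ : NSub) : LSub :=
  fun X => (σ X).map (fun t => lamList (as.map .inl) (trT as Δ t))

/-! The reverse translation -/

/-- The reverse translation relation from λ-terms to nominal terms
(nondeterministic because of the choice of the permutation `π`). -/
inductive RevTr (as : List Atom) (Δ : Finset (Atom × Var)) : LTerm → NTerm → Prop
  | atom (a) : RevTr as Δ (.var (.inl a)) (.atom a)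
  | appf {f ts us} : ts.length = us.length → (∀ p ∈ ts.zip us, RevTr as Δ p.1 p.2) →
      RevTr as Δ (appList (.const f) ts) (.app f us)
  | lam {a t u} : RevTr as Δ t u → RevTr as Δ (.lam (.inl a) t) (.abs a u)
  | susp {X : Var} {π : Perm0} {cs : List Atom} : (∀ a ∉ as, permAtom π a = a) →
      cs.map (permAtom π) = capList as Δ X →
      RevTr as Δ (appList (.var (.inr X)) (cs.map (fun c => .var (.inl c))))
        (.susp π.reverse X)

/-- β-reduce the application of a λ-term to the atom variables `as`. -/
def applyAtoms : LTerm → List Atom → LTerm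
  | .lam x t, a :: rest => applyAtoms (nsubst x (.var (.inl a)) t) rest
  | t, rest => appList t (rest.map (fun a => .var (.inl a)))

/-! "More general" relations on unifiers -/

/-- `Δ₂ ⊢ σ'(Δ₁)` : every freshness constraint of `Δ₁` holds after applying `σ'`. -/
def freshEnvHolds (Δ₂ : Finset (Atom × Var)) (σ' : NSub) (Δ₁ : Finset (Atom × Var)) : Prop :=
  ∀ p ∈ Δ₁, Fresh Δ₂ p.1 (applyN σ' (nsuspV p.2))

/-- `⟨Δ₁,σ₁⟩` is more general than `⟨Δ₂,σ₂⟩`. -/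
def moreGeneralN (Δ₁ : Finset (Atom × Var)) (σ₁ : NSub)
    (Δ₂ : Finset (Atom × Var)) (σ₂ : NSub) : Prop :=
  ∃ σ' : NSub, freshEnvHolds Δ₂ σ' Δ₁ ∧
    ∀ X ∈ domN σ₁ ∪ domN σ₂,
      Alpha Δ₂ (applyN σ' (applyN σ₁ (nsuspV X))) (applyN σ₂ (nsuspV X))

/-- A λ-substitution `σ₁` is more general than `σ₂` (modulo αβη). -/
def moreGeneralL (σ₁ σ₂ : LSub) : Prop :=
  ∃ σ' : LSub, ∀ X ∈ domL σ₁ ∪ domL σ₂,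
    Conv (applyL σ' (applyL σ₁ (.var (.inr X)))) (applyL σ₂ (.var (.inr X)))


/-- The permutation `Πₙ(x⃗, y⃗)` of variable names, defined recursively. -/
def PiPerm : List LVar → List LVar → (LVar → LVar)
  | x :: xs, y :: ys => (PiPerm (xs.map (varMap x y)) ys) ∘ (varMap x y)
  | _, _ => id
termination_by xs _ => xs.length
decreasing_by simp_wf

/-! Auxiliary lemmas for Statement 9 -/

lemma varMap_invol (x y z : LVar) : varMap x y (varMap x y z) = z := by
  unfold varMap; split_ifs <;> simp_all

lemma varMap_inj (x y : LVar) : Function.Injective (varMap x y) := by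
  intro a b h
  have := congrArg (varMap x y) h
  rwa [varMap_invol, varMap_invol] at this

lemma varMap_left (x y : LVar) : varMap x y x = y := by simp [varMap]

lemma varMap_other {x y z : LVar} (h1 : z ≠ x) (h2 : z ≠ y) : varMap x y z = z := by
  simp [varMap, h1, h2]

lemma renameAll_comp (f g : LVar → LVar) (t : LTerm) :
    renameAll f (renameAll g t) = renameAll (f ∘ g) t := by
  induction t <;> simp [renameAll, *]

lemma renameAll_congr {f g : LVar → LVar} (t : LTerm)
    (h : ∀ v ∈ allVarsL t, f v = g v) : renameAll f t = renameAll g t := by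
  induction t with
  | var v => simp [renameAll, h v (by simp [allVarsL])]
  | const c => simp [renameAll]
  | lam x u ih =>
      simp only [allVarsL, Finset.mem_insert] at h
      simp [renameAll, h x (Or.inl rfl), ih fun v hv => h v (Or.inr hv)]
  | app u v ihu ihv =>
      simp only [allVarsL, Finset.mem_union] at h
      simp [renameAll, ihu fun v hv => h v (Or.inl hv), ihv fun w hw => h w (Or.inr hw)]

lemma renameAll_id (t : LTerm) : renameAll id t = t := by
  induction t <;> simp [renameAll, *]

lemma swapL_self (x : LVar) (t : LTerm) : swapL x x t = t := by
  rw [swapL, renameAll_congr t (g := id), renameAll_id]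
  intro v _; by_cases h : v = x <;> simp [varMap, h]

lemma allVarsL_renameAll (f : LVar → LVar) (t : LTerm) :
    allVarsL (renameAll f t) = (allVarsL t).image f := by
  induction t <;> simp [renameAll, allVarsL, Finset.image_union, *]

lemma bvarsL_renameAll (f : LVar → LVar) (t : LTerm) :
    bvarsL (renameAll f t) = (bvarsL t).image f := by
  induction t <;> simp [renameAll, bvarsL, Finset.image_union, *]

lemma FVL_renameAll {f : LVar → LVar} (hf : Function.Injective f) (t : LTerm) :
    FVL (renameAll f t) = (FVL t).image f := by
  induction t with
  | var v => simp [renameAll, FVL]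
  | const c => simp [renameAll, FVL]
  | lam x u ih => simp [renameAll, FVL, ih, Finset.image_erase hf]
  | app u v ihu ihv => simp [renameAll, FVL, ihu, ihv, Finset.image_union]

lemma FVL_subset_allVarsL (t : LTerm) : FVL t ⊆ allVarsL t := by
  induction t with
  | var v => simp [FVL, allVarsL]
  | const c => simp [FVL, allVarsL]
  | lam x u ih =>
      intro v hv
      simp only [FVL, Finset.mem_erase] at hv
      simp only [allVarsL, Finset.mem_insert]
      exact Or.inr (ih hv.2)
  | app u v ihu ihv =>
      intro w hw
      simp only [FVL, Finset.mem_union] at hw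
      simp only [allVarsL, Finset.mem_union]
      exact hw.imp (@ihu w) (@ihv w)

lemma bvarsL_subset_allVarsL (t : LTerm) : bvarsL t ⊆ allVarsL t := by
  induction t with
  | var v => simp [bvarsL, allVarsL]
  | const c => simp [bvarsL, allVarsL]
  | lam x u ih =>
      intro v hv
      simp only [bvarsL, Finset.mem_insert] at hv
      simp only [allVarsL, Finset.mem_insert]
      exact hv.imp id (@ih v)
  | app u v ihu ihv =>
      intro w hw
      simp only [bvarsL, Finset.mem_union] at hw
      simp only [allVarsL, Finset.mem_union]
      exact hw.imp (@ihu w) (@ihv w)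

lemma allVarsL_subset (t : LTerm) : allVarsL t ⊆ FVL t ∪ bvarsL t := by
  induction t with
  | var v => simp [FVL, allVarsL, bvarsL]
  | const c => simp [FVL, allVarsL, bvarsL]
  | lam x u ih =>
      intro v hv
      simp only [allVarsL, Finset.mem_insert] at hv
      simp only [FVL, bvarsL, Finset.mem_union, Finset.mem_erase, Finset.mem_insert]
      rcases hv with rfl | hv
      · exact Or.inr (Or.inl rfl)
      · rcases Finset.mem_union.mp (ih hv) with h | h
        · by_cases hvx : v = x
          · exact Or.inr (Or.inl hvx)
          · exact Or.inl ⟨hvx, h⟩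
        · exact Or.inr (Or.inr h)
  | app u v ihu ihv =>
      intro w hw
      simp only [allVarsL, Finset.mem_union] at hw
      simp only [FVL, bvarsL, Finset.mem_union]
      rcases hw with h | h
      · rcases Finset.mem_union.mp (ihu h) with h | h
        · exact Or.inl (Or.inl h)
        · exact Or.inr (Or.inl h)
      · rcases Finset.mem_union.mp (ihv h) with h | h
        · exact Or.inl (Or.inr h)
        · exact Or.inr (Or.inr h)

lemma sizeL_pos (t : LTerm) : 0 < sizeL t := by
  cases t <;> simp [sizeL]

lemma AEq_refl (t : LTerm) : AEq t t := by
  cases t with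
  | var v => exact .var v
  | const c => exact .const c
  | app u v => exact .app (AEq_refl u) (AEq_refl v)
  | lam x u =>
      obtain ⟨z, hz⟩ := Infinite.exists_notMem_finset (insert x (allVarsL u))
      simp only [Finset.mem_insert, not_or] at hz
      exact AEq.lam z hz.2 hz.2 hz.1 hz.1 (AEq_refl (swapL x z u))
termination_by sizeL t
decreasing_by all_goals (simp [swapL, sizeL_renameAll, sizeL]; try omega)

lemma AEq_equivariant {f : LVar → LVar} (hf : Function.Injective f) {t u : LTerm}
    (h : AEq t u) : AEq (renameAll f t) (renameAll f u) := by
  induction h with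
  | var v => exact AEq_refl _
  | const c => exact AEq_refl _
  | app h1 h2 ih1 ih2 => exact .app ih1 ih2
  | @lam x y t u z hzt hzu hzx hzy h ih =>
      refine AEq.lam (f z) ?_ ?_ (fun hc => hzx (hf hc)) (fun hc => hzy (hf hc)) ?_
      · rw [allVarsL_renameAll]
        intro hc
        obtain ⟨w, hw, hwz⟩ := Finset.mem_image.mp hc
        exact hzt (hf hwz ▸ hw)
      · rw [allVarsL_renameAll]
        intro hc
        obtain ⟨w, hw, hwz⟩ := Finset.mem_image.mp hc
        exact hzu (hf hwz ▸ hw)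
      · have key : ∀ s : LTerm, ∀ a : LVar,
            swapL (f a) (f z) (renameAll f s) = renameAll f (swapL a z s) := by
          intro s a
          rw [swapL, swapL, renameAll_comp, renameAll_comp]
          apply renameAll_congr
          intro v _
          simp only [Function.comp_apply]
          by_cases h1 : v = a
          · simp [h1, varMap_left]
          · by_cases h2 : v = z
            · subst h2
              simp [varMap, h1, hf.ne h1]
            · rw [varMap_other h1 h2, varMap_other (hf.ne h1) (hf.ne h2)]
        rw [key, key]
        exact ih

lemma FVL_AEq {t u : LTerm} (h : AEq t u) : FVL t = FVL u := by
  induction h with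
  | var v => rfl
  | const c => rfl
  | app h1 h2 ih1 ih2 => simp [FVL, ih1, ih2]
  | @lam x y t u z hzt hzu hzx hzy h ih =>
      simp only [FVL]
      rw [swapL, swapL, FVL_renameAll (varMap_inj _ _), FVL_renameAll (varMap_inj _ _)] at ih
      ext v
      simp only [Finset.mem_erase]
      constructor
      · rintro ⟨hvx, hv⟩
        have hvz : v ≠ z := fun hc => hzt (FVL_subset_allVarsL t (hc ▸ hv))
        have : v ∈ (FVL u).image (varMap y z) := by
          rw [← ih]
          exact Finset.mem_image.mpr ⟨v, hv, varMap_other hvx hvz⟩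
        obtain ⟨w, hw, hwv⟩ := Finset.mem_image.mp this
        have hwz : w ≠ z := fun hc => hzu (FVL_subset_allVarsL u (hc ▸ hw))
        by_cases hwy : w = y
        · exfalso; rw [hwy, varMap_left] at hwv; exact hvz hwv.symm
        · rw [varMap_other hwy hwz] at hwv
          exact ⟨hwv ▸ hwy, hwv ▸ hw⟩
      · rintro ⟨hvy, hv⟩
        have hvz : v ≠ z := fun hc => hzu (FVL_subset_allVarsL u (hc ▸ hv))
        have : v ∈ (FVL t).image (varMap x z) := by
          rw [ih]
          exact Finset.mem_image.mpr ⟨v, hv, varMap_other hvy hvz⟩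
        obtain ⟨w, hw, hwv⟩ := Finset.mem_image.mp this
        have hwz : w ≠ z := fun hc => hzt (FVL_subset_allVarsL t (hc ▸ hw))
        by_cases hwx : w = x
        · exfalso; rw [hwx, varMap_left] at hwv; exact hvz hwv.symm
        · rw [varMap_other hwx hwz] at hwv
          exact ⟨hwv ▸ hwx, hwv ▸ hw⟩

/-- Freshening: every term is α-equivalent to one whose binders avoid `S`. -/
lemma freshen (t : LTerm) (S : Finset LVar) :
    ∃ t', AEq t t' ∧ ∀ v ∈ bvarsL t', v ∉ S := by
  cases t with
  | var v => exact ⟨.var v, AEq_refl _, by simp [bvarsL]⟩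
  | const c => exact ⟨.const c, AEq_refl _, by simp [bvarsL]⟩
  | app u v =>
      obtain ⟨u', hu1, hu2⟩ := freshen u S
      obtain ⟨v', hv1, hv2⟩ := freshen v S
      refine ⟨.app u' v', .app hu1 hv1, ?_⟩
      intro w hw
      simp only [bvarsL, Finset.mem_union] at hw
      exact hw.elim (hu2 w) (hv2 w)
  | lam x u =>
      obtain ⟨u', hu1, hu2⟩ := freshen u S
      obtain ⟨z, hz⟩ := Infinite.exists_notMem_finset
        (allVarsL u' ∪ S ∪ {x})
      simp only [Finset.mem_union, Finset.mem_singleton, not_or] at hz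
      obtain ⟨⟨hzu', hzS⟩, hzx⟩ := hz
      obtain ⟨z', hz'⟩ := Infinite.exists_notMem_finset
        (allVarsL u ∪ allVarsL u' ∪ allVarsL (swapL x z u') ∪ {x, z})
      simp only [Finset.mem_union, Finset.mem_insert, Finset.mem_singleton, not_or] at hz'
      obtain ⟨⟨⟨hz'u, hz'u'⟩, hz'sw⟩, hz'x, hz'z⟩ := hz'
      refine ⟨.lam z (swapL x z u'), ?_, ?_⟩
      · refine AEq.lam z' hz'u hz'sw hz'x hz'z ?_
        have : swapL z z' (swapL x z u') = swapL x z' u' := by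
          rw [swapL, swapL, swapL, renameAll_comp]
          apply renameAll_congr
          intro v hv
          have hvz : v ≠ z := fun hc => hzu' (hc ▸ hv)
          have hvz' : v ≠ z' := fun hc => hz'u' (hc ▸ hv)
          simp only [Function.comp_apply]
          by_cases hvx : v = x
          · simp [hvx, varMap_left, varMap, hz'z]
          · rw [varMap_other hvx hvz, varMap_other hvz hvz', varMap_other hvx hvz']
        rw [this]
        exact AEq_equivariant (varMap_inj _ _) hu1
      · intro v hv
        simp only [bvarsL, Finset.mem_insert] at hv
        rcases hv with rfl | hv
        · exact hzS
        · rw [swapL, bvarsL_renameAll] at hv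
          obtain ⟨w, hw, hwv⟩ := Finset.mem_image.mp hv
          have hwz : w ≠ z := fun hc => hzu' (bvarsL_subset_allVarsL u' (hc ▸ hw))
          by_cases hwx : w = x
          · rw [hwx, varMap_left] at hwv; exact hwv ▸ hzS
          · rw [varMap_other hwx hwz] at hwv; exact hwv ▸ hu2 w hw
termination_by sizeL t
decreasing_by all_goals (simp [sizeL]; try omega)

lemma nsubst_var_self (x : LVar) (t : LTerm) : nsubst x (.var x) t = t := by
  induction t with
  | var v => by_cases h : v = x <;> simp [nsubst, h]
  | const c => simp [nsubst]
  | lam y u ih => by_cases h : y = x <;> simp [nsubst, h, ih]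
  | app u v ihu ihv => simp [nsubst, ihu, ihv]

lemma nsubst_eq_swap {x y : LVar} {t : LTerm} (hx : x ∉ bvarsL t) (hy : y ∉ allVarsL t) :
    nsubst x (.var y) t = swapL x y t := by
  induction t with
  | var v =>
      simp only [allVarsL, Finset.mem_singleton] at hy
      by_cases h : v = x
      · simp [nsubst, h, swapL, renameAll, varMap_left]
      · simp [nsubst, h, swapL, renameAll, varMap_other h (Ne.symm hy)]
  | const c => simp [nsubst, swapL, renameAll]
  | lam z u ih =>
      simp only [bvarsL, Finset.mem_insert, not_or] at hx
      simp only [allVarsL, Finset.mem_insert, not_or] at hy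
      simp [nsubst, Ne.symm hx.1, swapL, renameAll,
        varMap_other (Ne.symm hx.1) (Ne.symm hy.1), ih hx.2 hy.2]
  | app u v ihu ihv =>
      simp only [bvarsL, Finset.mem_union, not_or] at hx
      simp only [allVarsL, Finset.mem_union, not_or] at hy
      simp [nsubst, swapL, renameAll, ihu hx.1 hy.1, ihv hx.2 hy.2]

/-- Key single-step lemma: β-reducing `(λx.t) y` gives `(x y)·t` up to conversion. -/
lemma keyBeta {x y : LVar} {t : LTerm} (h : y ∉ FVL (.lam x t)) :
    Conv (.app (.lam x t) (.var y)) (swapL x y t) := by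
  obtain ⟨t1, ht1, hb⟩ := freshen t {x, y}
  have step1 : Conv (.app (.lam x t) (.var y)) (.app (.lam x t1) (.var y)) :=
    .appc (.lamc (.alpha ht1)) (.refl _)
  have hyb : y ∉ bvarsL t1 := fun hc => hb y hc (by simp)
  have hxb : x ∉ bvarsL t1 := fun hc => hb x hc (by simp)
  have step2 : Conv (.app (.lam x t1) (.var y)) (nsubst x (.var y) t1) := by
    apply Conv.beta
    intro v hv
    simp only [FVL, Finset.mem_singleton] at hv
    exact hv ▸ hyb
  by_cases hxy : x = y
  · subst hxy
    rw [nsubst_var_self] at step2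
    rw [swapL_self]
    exact (step1.trans step2).trans (.symm (.alpha ht1))
  · have hyf : y ∉ FVL t1 := by
      rw [← FVL_AEq ht1]
      simp only [FVL, Finset.mem_erase] at h
      intro hc; exact h ⟨Ne.symm hxy, hc⟩
    have hya : y ∉ allVarsL t1 := fun hc => by
      rcases Finset.mem_union.mp (allVarsL_subset t1 hc) with h' | h'
      · exact hyf h'
      · exact hyb h'
    rw [nsubst_eq_swap hxb hya] at step2
    have step3 : Conv (swapL x y t1) (swapL x y t) :=
      .symm (.alpha (AEq_equivariant (varMap_inj _ _) ht1))
    exact (step1.trans step2).trans step3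

lemma conv_appList {h h' : LTerm} (ts : List LTerm) (hc : Conv h h') :
    Conv (appList h ts) (appList h' ts) := by
  induction ts generalizing h h' with
  | nil => exact hc
  | cons a ts ih => exact ih (.appc hc (.refl a))

lemma renameAll_lamList (f : LVar → LVar) (xs : List LVar) (t : LTerm) :
    renameAll f (lamList xs t) = lamList (xs.map f) (renameAll f t) := by
  induction xs with
  | nil => rfl
  | cons x xs ih => simp [lamList, renameAll] at ih ⊢; exact ih

/-- if `y⃗` are pairwise distinct and none of them is free in
`λx⃗.t`, then the β-normal form of `(λx⃗.t)(y⃗)` is, up to α,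
`Πₙ(x⃗,y⃗)·t` (stated via αβη-convertibility). -/
theorem statement9 (t : LTerm) (xs ys : List LVar)
    (hlen : xs.length = ys.length) (hnd : ys.Nodup)
    (hfv : ∀ y ∈ ys, y ∉ FVL (lamList xs t)) :
    Conv (appList (lamList xs t) (ys.map .var)) (renameAll (PiPerm xs ys) t) := by
  induction ys generalizing t xs with
  | nil =>
      cases xs with
      | nil =>
          have hPi : PiPerm ([] : List LVar) [] = id := by
            rw [PiPerm]
            exact fun x xs y ys h _ => by cases h
          simpa [appList, lamList, hPi, renameAll_id] using Conv.refl t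
      | cons x xs => simp at hlen
  | cons y ys ih =>
      cases xs with
      | nil => simp at hlen
      | cons x xs =>
          simp only [List.length_cons, Nat.add_right_cancel_iff] at hlen
          obtain ⟨hy, hnd'⟩ := List.nodup_cons.mp hnd
          have hfv0 : y ∉ FVL (LTerm.lam x (lamList xs t)) := hfv y (by simp)
          have h1 : Conv (LTerm.app (.lam x (lamList xs t)) (.var y))
              (swapL x y (lamList xs t)) := keyBeta hfv0
          have h2 := conv_appList (ys.map LTerm.var) h1
          have hsw : swapL x y (lamList xs t)
              = lamList (xs.map (varMap x y)) (swapL x y t) := by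
            rw [swapL, renameAll_lamList]; rfl
          have hfv' : ∀ y' ∈ ys,
              y' ∉ FVL (lamList (xs.map (varMap x y)) (swapL x y t)) := by
            intro y' hy'
            rw [← hsw, swapL, FVL_renameAll (varMap_inj x y)]
            intro hc
            obtain ⟨w, hw, hwv⟩ := Finset.mem_image.mp hc
            have hw' : w = varMap x y y' := by rw [← hwv, varMap_invol]
            have hy'y : y' ≠ y := fun hc' => hy (hc' ▸ hy')
            by_cases hy'x : y' = x
            · rw [hy'x, varMap_left] at hw'
              subst hw'
              apply hfv0
              simp only [FVL, Finset.mem_erase]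
              exact ⟨fun hc' => hy'y (hy'x ▸ hc'.symm), hw⟩
            · rw [varMap_other hy'x hy'y] at hw'
              subst hw'
              apply hfv w (by simp [hy'])
              simp only [FVL, lamList, List.foldr_cons, Finset.mem_erase]
              exact ⟨hy'x, hw⟩
          have h3 := ih (swapL x y t) (xs.map (varMap x y)) (by simpa using hlen) hnd' hfv'
          rw [hsw] at h2
          have hgoal : renameAll (PiPerm (x :: xs) (y :: ys)) t
              = renameAll (PiPerm (xs.map (varMap x y)) ys) (swapL x y t) := by
            rw [PiPerm, swapL, renameAll_comp]
          rw [hgoal]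
          exact (h2.trans h3)
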